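/- arXiv:1804.02468 — 6 statements merged into one kernel-verified Lean document; each statement's English description precedes it below -/
import Mathlib

section
/- There is no additive quaternary code of length 16 and F_2-dimension 7 (quaternary dimension 3.5) with minimum distance 12. -/
/-- The quaternary weight of a word in `(𝔽₂²)ⁿ`: the number of coordinates with
nonzero entry. -/
noncomputable def qWt {n : ℕ} (x : Fin n → ZMod 2 × ZMod 2) : ℕ := {i | x i ≠ 0}.ncard

open Finset

/-- Counting the kernel of the restriction to a submodule of a linear map. -/
private lemma count_ker {V W : Type*} [AddCommGroup V] [Module (ZMod 2) V]
    [AddCommGroup W] [Module (ZMod 2) W] [Finite W]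
    (C : Submodule (ZMod 2) V) (f : V →ₗ[ZMod 2] W) (P : V → Prop)
    (hP : ∀ x, P x ↔ f x = 0) :
    Nat.card C ≤ Nat.card {x : V // x ∈ C ∧ P x} * Nat.card W ∧
      Nat.card {x : V // x ∈ C ∧ P x} ∣ Nat.card C := by
  set g := f.domRestrict C with hg
  have hker : Nat.card (LinearMap.ker g) = Nat.card {x : V // x ∈ C ∧ P x} := by
    refine Nat.card_congr ?_
    refine (Equiv.subtypeEquivRight ?_).trans
      (Equiv.subtypeSubtypeEquivSubtypeInter (· ∈ C) P)
    intro c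
    simp [hg, LinearMap.mem_ker, hP]
  have h := Submodule.card_eq_card_quotient_mul_card (LinearMap.ker g)
  have hq : Nat.card (↥C ⧸ LinearMap.ker g) = Nat.card (LinearMap.range g) :=
    Nat.card_congr g.quotKerEquivRange.toEquiv
  have hle : Nat.card (LinearMap.range g) ≤ Nat.card W :=
    Nat.card_le_card_of_injective _ Subtype.val_injective
  constructor
  · calc Nat.card C
        = Nat.card (LinearMap.ker g) * Nat.card (↥C ⧸ LinearMap.ker g) := h
      _ ≤ Nat.card (LinearMap.ker g) * Nat.card W :=
        Nat.mul_le_mul le_rfl (hq.trans_le hle)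
      _ = Nat.card {x : V // x ∈ C ∧ P x} * Nat.card W := by rw [hker]
  · rw [h, ← hker]
    exact dvd_mul_right _ _


private lemma dvd128 {z : ℕ} (h1 : z ∣ 128) (h2 : 33 ≤ z) : 64 ≤ z := by
  obtain ⟨t, ht⟩ := h1
  have ht4 : t ≤ 3 := by
    by_contra h4
    push_neg at h4
    nlinarith
  interval_cases t <;> omega

/-- There is no additive quaternary code of length 16, 𝔽₂-dimension 7
(quaternary dimension 3.5) and minimum distance 12. -/
theorem no_additive_16_3half_12 :
    ¬ ∃ C : Submodule (ZMod 2) (Fin 16 → ZMod 2 × ZMod 2),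
      Module.finrank (ZMod 2) C = 7 ∧ ∀ x ∈ C, x ≠ 0 → 12 ≤ qWt x := by
  classical
  rintro ⟨C, hrank, hdist⟩
  -- the codewords, as a finset
  obtain ⟨S, hS⟩ : ∃ S : Finset (Fin 16 → ZMod 2 × ZMod 2),
      S = Finset.univ.filter (· ∈ C) := ⟨_, rfl⟩
  have hC128 : Nat.card C = 128 := by
    have h1 : Fintype.card C = Fintype.card (ZMod 2) ^ Module.finrank (ZMod 2) C :=
      Module.card_eq_pow_finrank
    rw [Nat.card_eq_fintype_card, h1, hrank, ZMod.card]
    norm_num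
  have hScard : S.card = 128 := by
    rw [hS, ← Fintype.card_subtype, ← Nat.card_eq_fintype_card]
    exact hC128
  -- the weight function
  obtain ⟨w, hw⟩ : ∃ w : (Fin 16 → ZMod 2 × ZMod 2) → ℕ,
      w = fun x => (univ.filter (fun i => x i ≠ 0)).card := ⟨_, rfl⟩
  have hqw : ∀ x : Fin 16 → ZMod 2 × ZMod 2, qWt x = w x := by
    intro x
    rw [hw, qWt, Set.ncard_eq_toFinset_card']
    simp
  -- counting functions
  obtain ⟨N, hN⟩ : ∃ N : Fin 16 → Fin 16 → ℕ,
      N = fun i j => (S.filter (fun c => c i ≠ 0 ∧ c j ≠ 0)).card := ⟨_, rfl⟩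
  obtain ⟨N1, hN1⟩ : ∃ N1 : Fin 16 → ℕ,
      N1 = fun i => (S.filter (fun c => c i ≠ 0)).card := ⟨_, rfl⟩
  obtain ⟨Z, hZ⟩ : ∃ Z : Fin 16 → ℕ,
      Z = fun i => (S.filter (fun c => c i = 0)).card := ⟨_, rfl⟩
  obtain ⟨K2, hK2⟩ : ∃ K2 : Fin 16 → Fin 16 → ℕ,
      K2 = fun i j => (S.filter (fun c => c i = 0 ∧ c j = 0)).card := ⟨_, rfl⟩
  -- kernel bounds for single coordinates
  have hZ32 : ∀ i : Fin 16, 32 ≤ Z i ∧ Z i ∣ 128 := by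
    intro i
    obtain ⟨h1, h2⟩ := count_ker C
      (LinearMap.proj i :
        (Fin 16 → ZMod 2 × ZMod 2) →ₗ[ZMod 2] ZMod 2 × ZMod 2)
      (fun c => c i = 0) (fun x => Iff.rfl)
    have hz : Z i = Nat.card {x : Fin 16 → ZMod 2 × ZMod 2 // x ∈ C ∧ x i = 0} := by
      simp only [hZ]
      rw [Nat.card_eq_fintype_card, Fintype.card_subtype, hS, Finset.filter_filter]
    have hW : Nat.card (ZMod 2 × ZMod 2) = 4 := by
      simp [Nat.card_eq_fintype_card]
    rw [hC128] at h1 h2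
    rw [hW] at h1
    rw [hz]
    exact ⟨by linarith, h2⟩
  -- kernel bounds for pairs of coordinates
  have hK8 : ∀ i j : Fin 16, 8 ≤ K2 i j := by
    intro i j
    obtain ⟨h1, -⟩ := count_ker C
      ((LinearMap.proj i).prod (LinearMap.proj j) :
        (Fin 16 → ZMod 2 × ZMod 2) →ₗ[ZMod 2] (ZMod 2 × ZMod 2) × ZMod 2 × ZMod 2)
      (fun c => c i = 0 ∧ c j = 0)
      (fun x => by simp [LinearMap.prod_apply, LinearMap.proj_apply, Prod.ext_iff])
    have hz : K2 i j
        = Nat.card {x : Fin 16 → ZMod 2 × ZMod 2 // x ∈ C ∧ x i = 0 ∧ x j = 0} := by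
      simp only [hK2]
      rw [Nat.card_eq_fintype_card, Fintype.card_subtype, hS, Finset.filter_filter]
    have hW : Nat.card ((ZMod 2 × ZMod 2) × ZMod 2 × ZMod 2) = 16 := by
      simp [Nat.card_eq_fintype_card]
    rw [hC128, hW] at h1
    rw [hz]
    linarith
  -- inclusion-exclusion identity
  have hNZ : ∀ i j : Fin 16, N i j + Z i + Z j = 128 + K2 i j := by
    intro i j
    have ha : (S.filter (fun c => c i ≠ 0 ∧ c j ≠ 0)).card
        + (S.filter (fun c => ¬(c i ≠ 0 ∧ c j ≠ 0))).card = 128 := by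
      rw [← hScard]
      exact Finset.card_filter_add_card_filter_not _
    have hb : (S.filter (fun c => ¬(c i ≠ 0 ∧ c j ≠ 0))).card
        = (S.filter (fun c => c i = 0) ∪ S.filter (fun c => c j = 0)).card := by
      congr 1
      rw [← Finset.filter_or]
      exact Finset.filter_congr (fun c _ => by tauto)
    have hd : (S.filter (fun c => c i = 0) ∪ S.filter (fun c => c j = 0)).card
        + (S.filter (fun c => c i = 0 ∧ c j = 0)).card
        = (S.filter (fun c => c i = 0)).card + (S.filter (fun c => c j = 0)).card := by
      have h := Finset.card_union_add_card_inter
        (S.filter (fun c => c i = 0)) (S.filter (fun c => c j = 0))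
      rw [← Finset.filter_and] at h
      exact h
    simp only [hN, hZ, hK2]
    linarith
  have hK2diag : ∀ i : Fin 16, K2 i i = Z i := by
    intro i
    simp only [hK2, hZ, and_self]
  -- first moment: double counting
  have hsum1 : ∑ c ∈ S, w c = ∑ i : Fin 16, N1 i := by
    simp only [hw, hN1, Finset.card_filter]
    exact Finset.sum_comm
  have hZN1 : ∀ i : Fin 16, N1 i + Z i = 128 := by
    intro i
    have h := Finset.card_filter_add_card_filter_not
      (s := S) (p := fun c => c i ≠ 0)
    have h2 : S.filter (fun c => ¬(c i ≠ 0)) = S.filter (fun c => c i = 0) :=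
      Finset.filter_congr (fun c _ => by tauto)
    rw [h2, hScard] at h
    simp only [hN1, hZ]
    exact h
  -- zero is a codeword
  have h0S : (0 : Fin 16 → ZMod 2 × ZMod 2) ∈ S := by
    simp [hS, C.zero_mem]
  have hw0 : w 0 = 0 := by
    simp only [hw, Finset.card_eq_zero, Finset.filter_eq_empty_iff]
    intro i _
    simp
  have herase : (S.erase 0).card = 127 := by
    rw [Finset.card_erase_of_mem h0S, hScard]
  have hwlow : ∀ c ∈ S.erase 0, 12 ≤ w c := by
    intro c hc
    have hcC : c ∈ C := by
      have := Finset.mem_of_mem_erase hc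
      simpa [hS] using this
    have hc0 : c ≠ 0 := Finset.ne_of_mem_erase hc
    have := hdist c hcC hc0
    rwa [hqw c] at this
  have hwhigh : ∀ c : Fin 16 → ZMod 2 × ZMod 2, w c ≤ 16 := by
    intro c
    rw [hw]
    calc (univ.filter (fun i => c i ≠ 0)).card
        ≤ (univ : Finset (Fin 16)).card := Finset.card_filter_le _ _
      _ = 16 := by simp
  -- lower bound on total weight
  have hfirst : 1524 ≤ ∑ c ∈ S, w c := by
    rw [← Finset.sum_erase S hw0]
    calc (1524 : ℕ) = 127 * 12 := by norm_num
      _ = ∑ _c ∈ S.erase 0, 12 := by rw [Finset.sum_const, herase, smul_eq_mul]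
      _ ≤ ∑ c ∈ S.erase 0, w c := Finset.sum_le_sum hwlow
  -- sum of the two complementary counts
  have hZsum : ∑ i : Fin 16, N1 i + ∑ i : Fin 16, Z i = 2048 := by
    rw [← Finset.sum_add_distrib]
    calc ∑ i : Fin 16, (N1 i + Z i) = ∑ _i : Fin 16, 128 :=
          Finset.sum_congr rfl fun i _ => hZN1 i
      _ = 2048 := by simp
  -- all coordinate projections are surjective: Z i = 32
  have hZall : ∀ i : Fin 16, Z i = 32 := by
    by_contra h
    push_neg at h
    obtain ⟨i, hi⟩ := h
    have h64 : 64 ≤ Z i :=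
      dvd128 (hZ32 i).2 ((hZ32 i).1.lt_of_ne (Ne.symm hi))
    have hlb : 64 + ∑ j ∈ univ.erase i, Z j ≤ ∑ j : Fin 16, Z j := by
      rw [← Finset.add_sum_erase _ Z (Finset.mem_univ i)]
      exact Nat.add_le_add_right h64 _
    have hlb2 : (480 : ℕ) ≤ ∑ j ∈ univ.erase i, Z j := by
      calc (480 : ℕ) = 15 * 32 := by norm_num
        _ = ∑ _j ∈ (univ : Finset (Fin 16)).erase i, 32 := by
            rw [Finset.sum_const, Finset.card_erase_of_mem (Finset.mem_univ i),
              smul_eq_mul]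
            simp
        _ ≤ ∑ j ∈ univ.erase i, Z j := Finset.sum_le_sum (fun j _ => (hZ32 j).1)
    rw [hsum1] at hfirst
    linarith
  -- hence total weight is exactly 1536
  have htotal : ∑ c ∈ S, w c = 1536 := by
    rw [hsum1]
    have hn : ∀ i : Fin 16, N1 i = 96 := fun i => by
      have h1 := hZN1 i
      have h2 := hZall i
      linarith
    calc ∑ i : Fin 16, N1 i = ∑ _i : Fin 16, 96 :=
          Finset.sum_congr rfl fun i _ => hn i
      _ = 1536 := by simp
  -- second moment: double counting
  have hsum2 : ∑ c ∈ S, w c * w c = ∑ i : Fin 16, ∑ j : Fin 16, N i j := by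
    have key : ∀ c : Fin 16 → ZMod 2 × ZMod 2, w c * w c
        = ∑ i : Fin 16, ∑ j : Fin 16, (if c i ≠ 0 ∧ c j ≠ 0 then 1 else 0) := by
      intro c
      simp only [hw, Finset.card_filter, Finset.sum_mul_sum]
      refine Finset.sum_congr rfl fun i _ => Finset.sum_congr rfl fun j _ => ?_
      by_cases h1 : c i ≠ 0 <;> by_cases h2 : c j ≠ 0 <;> simp [h1, h2]
    calc ∑ c ∈ S, w c * w c
        = ∑ c ∈ S, ∑ i : Fin 16, ∑ j : Fin 16,
            (if c i ≠ 0 ∧ c j ≠ 0 then 1 else 0) :=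
          Finset.sum_congr rfl fun c _ => key c
      _ = ∑ i : Fin 16, ∑ c ∈ S, ∑ j : Fin 16,
            (if c i ≠ 0 ∧ c j ≠ 0 then 1 else 0) := Finset.sum_comm
      _ = ∑ i : Fin 16, ∑ j : Fin 16, ∑ c ∈ S,
            (if c i ≠ 0 ∧ c j ≠ 0 then 1 else 0) :=
          Finset.sum_congr rfl fun i _ => Finset.sum_comm
      _ = ∑ i : Fin 16, ∑ j : Fin 16, N i j := by
          simp only [hN, Finset.card_filter]
  -- bounds on N
  have hN72 : ∀ i j : Fin 16, 72 ≤ N i j := by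
    intro i j
    have h1 := hNZ i j
    have h2 := hK8 i j
    have h3 := hZall i
    have h4 := hZall j
    linarith
  have hN96 : ∀ i : Fin 16, N i i = 96 := by
    intro i
    have h1 := hNZ i i
    have h2 := hK2diag i
    have h3 := hZall i
    linarith
  -- lower bound on the second moment
  have hlow : 18816 ≤ ∑ i : Fin 16, ∑ j : Fin 16, N i j := by
    have hrow : ∀ i : Fin 16, 1176 ≤ ∑ j : Fin 16, N i j := by
      intro i
      rw [← Finset.add_sum_erase _ (N i) (Finset.mem_univ i), hN96 i]
      have h1080 : (1080 : ℕ) ≤ ∑ j ∈ univ.erase i, N i j := by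
        calc (1080 : ℕ) = 15 * 72 := by norm_num
          _ = ∑ _j ∈ (univ : Finset (Fin 16)).erase i, 72 := by
              rw [Finset.sum_const, Finset.card_erase_of_mem (Finset.mem_univ i),
                smul_eq_mul]
              simp
          _ ≤ ∑ j ∈ univ.erase i, N i j := Finset.sum_le_sum (fun j _ => hN72 i j)
      linarith
    calc (18816 : ℕ) = ∑ _i : Fin 16, 1176 := by simp
      _ ≤ ∑ i : Fin 16, ∑ j : Fin 16, N i j := Finset.sum_le_sum (fun i _ => hrow i)
  -- upper bound on the second moment
  have hup : ∑ c ∈ S, w c * w c ≤ 18624 := by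
    rw [show ∑ c ∈ S, w c * w c = ∑ c ∈ S.erase 0, w c * w c from
      (Finset.sum_erase S (a := 0) (by simp [hw0])).symm]
    have pt : ∀ c ∈ S.erase 0, w c * w c + 192 ≤ 28 * w c := by
      intro c hc
      have h1 := hwlow c hc
      have h2 := hwhigh c
      obtain ⟨n, hn⟩ : ∃ n, w c = n := ⟨_, rfl⟩
      rw [hn] at h1 h2 ⊢
      interval_cases n <;> norm_num
    have hsum : ∑ c ∈ S.erase 0, (w c * w c + 192) ≤ ∑ c ∈ S.erase 0, 28 * w c :=
      Finset.sum_le_sum pt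
    rw [Finset.sum_add_distrib, Finset.sum_const, ← Finset.mul_sum,
      Finset.sum_erase S hw0, htotal, herase, smul_eq_mul] at hsum
    linarith
  have hcontr : (18816 : ℕ) ≤ 18624 := hlow.trans (hsum2.symm.trans_le hup)
  exact absurd hcontr (by norm_num)
end

section
/- There is no additive quaternary code of length 15 and F_2-dimension 5 (quaternary dimension 2.5) with minimum distance 12. -/
/-- There is no additive quaternary code of length 15, 𝔽₂-dimension 5
(quaternary dimension 2.5) and minimum distance 12. -/
theorem no_additive_15_2half_12 :
    ¬ ∃ C : Submodule (ZMod 2) (Fin 15 → ZMod 2 × ZMod 2),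
      Module.finrank (ZMod 2) C = 5 ∧ ∀ x ∈ C, x ≠ 0 → 12 ≤ qWt x := by
  rintro ⟨C, hrank, hmin⟩
  classical
  haveI : Fintype C := Fintype.ofFinite C
  have hcard : Fintype.card C = 32 := by
    have h := Module.card_eq_pow_finrank (K := ZMod 2) (V := C)
    rw [hrank] at h
    simpa using h
  -- per-coordinate bound: at most 24 codewords are nonzero at any coordinate
  have hcol : ∀ i : Fin 15,
      (Finset.univ.filter fun x : C => (x : Fin 15 → ZMod 2 × ZMod 2) i ≠ 0).card ≤ 24 := by
    intro i
    set f : C →ₗ[ZMod 2] ZMod 2 × ZMod 2 :=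
      (LinearMap.proj i).comp C.subtype with hf
    have hker : 3 ≤ Module.finrank (ZMod 2) (LinearMap.ker f) := by
      have h1 := LinearMap.finrank_range_add_finrank_ker f
      have h2 : Module.finrank (ZMod 2) (LinearMap.range f) ≤ 2 := by
        have := Submodule.finrank_le (LinearMap.range f)
        simpa using this
      rw [hrank] at h1
      omega
    have hkcard : 8 ≤ Fintype.card (LinearMap.ker f) := by
      have h := Module.card_eq_pow_finrank (K := ZMod 2) (V := LinearMap.ker f)
      rw [h]
      calc (8:ℕ) = 2^3 := rfl
        _ ≤ 2 ^ Module.finrank (ZMod 2) (LinearMap.ker f) := by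
            apply Nat.pow_le_pow_right <;> simp [hker]
        _ = (Fintype.card (ZMod 2)) ^ Module.finrank (ZMod 2) (LinearMap.ker f) := by simp
    have hzero : (Finset.univ.filter fun x : C => (x : Fin 15 → ZMod 2 × ZMod 2) i = 0).card
        = Fintype.card (LinearMap.ker f) := by
      rw [← Fintype.card_subtype]
      exact (Fintype.card_congr (Equiv.subtypeEquivRight (fun x => by
        simp [hf, LinearMap.mem_ker]))).symm
    have hsplit := Finset.card_filter_add_card_filter_not
      (s := (Finset.univ : Finset C))
      (p := fun x : C => (x : Fin 15 → ZMod 2 × ZMod 2) i = 0)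
    rw [Finset.card_univ, hcard, hzero] at hsplit
    simp only [ne_eq]
    omega
  -- double counting
  have hqwt : ∀ x : C, qWt (x : Fin 15 → ZMod 2 × ZMod 2)
      = (Finset.univ.filter fun i : Fin 15 => (x : Fin 15 → ZMod 2 × ZMod 2) i ≠ 0).card := by
    intro x
    rw [qWt, Set.ncard_eq_toFinset_card']
    congr 1
    ext i
    simp
  have hsum : ∑ x : C, qWt (x : Fin 15 → ZMod 2 × ZMod 2)
      = ∑ i : Fin 15,
        (Finset.univ.filter fun x : C => (x : Fin 15 → ZMod 2 × ZMod 2) i ≠ 0).card := by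
    simp_rw [hqwt, Finset.card_filter]
    exact Finset.sum_comm
  have hupper : ∑ x : C, qWt (x : Fin 15 → ZMod 2 × ZMod 2) ≤ 360 := by
    rw [hsum]
    calc ∑ i : Fin 15,
        (Finset.univ.filter fun x : C => (x : Fin 15 → ZMod 2 × ZMod 2) i ≠ 0).card
        ≤ ∑ _i : Fin 15, 24 := Finset.sum_le_sum fun i _ => hcol i
      _ = 360 := by simp
  have hlow : 372 ≤ ∑ x : C, qWt (x : Fin 15 → ZMod 2 × ZMod 2) := by
    have hsub : (Finset.univ.filter fun x : C => x ≠ 0).card = 31 := by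
      rw [Finset.filter_ne', Finset.card_erase_of_mem (Finset.mem_univ _),
        Finset.card_univ, hcard]
    calc (372:ℕ) = 31 * 12 := rfl
      _ ≤ ∑ x ∈ Finset.univ.filter (fun x : C => x ≠ 0),
            qWt (x : Fin 15 → ZMod 2 × ZMod 2) := by
          have h := Finset.card_nsmul_le_sum
            (Finset.univ.filter fun x : C => x ≠ 0)
            (fun x : C => qWt (x : Fin 15 → ZMod 2 × ZMod 2)) 12
            (fun x hx => hmin (x : Fin 15 → ZMod 2 × ZMod 2) x.2 (by
              simp only [Finset.mem_filter] at hx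
              exact fun h => hx.2 (Subtype.ext h)))
          simpa [hsub, smul_eq_mul] using h
      _ ≤ ∑ x : C, qWt (x : Fin 15 → ZMod 2 × ZMod 2) :=
          Finset.sum_le_sum_of_subset (Finset.filter_subset _ _)
  omega
end

section
/- Let a multiset of 17 pairwise disjoint lines in PG(7,2) be given such that every hyperplane contains at most 5 of them. If every hyperplane V_7 contains at most 27 of the 51 points covered, then every 6-dimensional binary subspace V_6 contains at most 15 covered points, every V_5 at most 9, every V_4 at most 6, and every V_3 at most 4. -/
/-- The set of nonzero points of a subspace `X` covered by a family of lines `L`. -/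
def covered (L : Fin 17 → Submodule (ZMod 2) (Fin 8 → ZMod 2))
    (X : Submodule (ZMod 2) (Fin 8 → ZMod 2)) : Set (Fin 8 → ZMod 2) :=
  {v | v ≠ 0 ∧ v ∈ X ∧ ∃ i, v ∈ L i}

open Module Finset

abbrev Vs : Type := Fin 8 → ZMod 2

instance : Finite (Submodule (ZMod 2) Vs) :=
  Finite.of_injective (fun W => (W : Set Vs)) SetLike.coe_injective

noncomputable instance : Fintype (Submodule (ZMod 2) Vs) := Fintype.ofFinite _

open Classical in
lemma card_filter_mem (W : Submodule (ZMod 2) Vs) :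
    (univ.filter (· ∈ W)).card = 2 ^ finrank (ZMod 2) W := by
  have h1 : Fintype.card W = Fintype.card (ZMod 2) ^ finrank (ZMod 2) W :=
    card_eq_pow_finrank
  rw [ZMod.card] at h1
  rw [← h1, Fintype.card_subtype]

lemma unique_ext (X : Submodule (ZMod 2) Vs) (v : Vs) (hv : v ∉ X) :
    ∃! Y : Submodule (ZMod 2) Vs,
      (X ≤ Y ∧ finrank (ZMod 2) Y = finrank (ZMod 2) X + 1) ∧ v ∈ Y := by
  have hv0 : v ≠ 0 := fun h => hv (h ▸ X.zero_mem)
  have hinf : X ⊓ Submodule.span (ZMod 2) {v} = ⊥ := by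
    rw [eq_bot_iff]
    intro x hx
    rw [Submodule.mem_inf] at hx
    obtain ⟨hx1, hx2⟩ := hx
    rw [Submodule.mem_span_singleton] at hx2
    obtain ⟨a, rfl⟩ := hx2
    have : ∀ b : ZMod 2, b = 0 ∨ b = 1 := by decide
    rcases this a with rfl | rfl
    · simp
    · simp at hx1; exact absurd hx1 hv
  have hrank : finrank (ZMod 2) (X ⊔ Submodule.span (ZMod 2) {v} : Submodule (ZMod 2) Vs)
      = finrank (ZMod 2) X + 1 := by
    have := Submodule.finrank_sup_add_finrank_inf_eq X (Submodule.span (ZMod 2) {v})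
    rw [hinf, finrank_span_singleton hv0] at this
    simpa using this
  refine ⟨X ⊔ Submodule.span (ZMod 2) {v}, ⟨⟨le_sup_left, hrank⟩, ?_⟩, ?_⟩
  · exact Submodule.mem_sup_right (Submodule.mem_span_singleton_self v)
  · rintro Y ⟨⟨hXY, hY⟩, hvY⟩
    have hle : X ⊔ Submodule.span (ZMod 2) {v} ≤ Y :=
      sup_le hXY ((Submodule.span_singleton_le_iff_mem v Y).2 hvY)
    exact (Submodule.eq_of_le_of_finrank_eq hle (by rw [hrank, hY])).symm

open Classical in
lemma filter_ext_card_one (X : Submodule (ZMod 2) Vs) (k : ℕ) (hX : finrank (ZMod 2) X = k)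
    (v : Vs) (hv : v ∉ X) :
    ((univ.filter (fun Y : Submodule (ZMod 2) Vs => X ≤ Y ∧ finrank (ZMod 2) Y = k + 1)).filter
      (v ∈ ·)).card = 1 := by
  obtain ⟨Y₀, ⟨⟨hXY₀, hY₀⟩, hvY₀⟩, huniq⟩ := unique_ext X v hv
  rw [Finset.card_eq_one]
  refine ⟨Y₀, ?_⟩
  rw [Finset.eq_singleton_iff_unique_mem]
  constructor
  · simp only [Finset.mem_filter, Finset.mem_univ, true_and]
    exact ⟨⟨hXY₀, by rw [hY₀, hX]⟩, hvY₀⟩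
  · intro Y hY
    simp only [Finset.mem_filter, Finset.mem_univ, true_and] at hY
    exact huniq Y ⟨⟨hY.1.1, by rw [hY.1.2, hX]⟩, hY.2⟩

open Classical in
lemma double_count (A : Finset Vs) (S : Finset (Submodule (ZMod 2) Vs)) :
    ∑ Y ∈ S, (A.filter (· ∈ Y)).card = ∑ v ∈ A, (S.filter (v ∈ ·)).card := by
  simp only [Finset.card_filter]
  exact Finset.sum_comm

open Classical in
lemma card_exts (X : Submodule (ZMod 2) Vs) (k : ℕ) (hk : k ≤ 7)
    (hX : finrank (ZMod 2) X = k) :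
    (univ.filter (fun Y : Submodule (ZMod 2) Vs =>
      X ≤ Y ∧ finrank (ZMod 2) Y = k + 1)).card = 2 ^ (8 - k) - 1 := by
  set S := univ.filter (fun Y : Submodule (ZMod 2) Vs =>
      X ≤ Y ∧ finrank (ZMod 2) Y = k + 1) with hS
  set A := univ.filter (fun v : Vs => v ∉ X) with hA
  have h1 : ∀ Y ∈ S, (A.filter (· ∈ Y)).card = 2 ^ k := by
    intro Y hY
    rw [hS, Finset.mem_filter] at hY
    obtain ⟨-, hXY, hYr⟩ := hY
    have hBX : (univ.filter (· ∈ Y)).filter (· ∈ X) = univ.filter (· ∈ X) := by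
      ext v
      simp only [Finset.mem_filter, Finset.mem_univ, true_and]
      exact ⟨fun h => h.2, fun h => ⟨hXY h, h⟩⟩
    have hsplit := Finset.card_filter_add_card_filter_not
      (s := univ.filter (· ∈ Y)) (p := (· ∈ X))
    rw [hBX, card_filter_mem, card_filter_mem, hYr, hX] at hsplit
    have hAY : A.filter (· ∈ Y) = (univ.filter (· ∈ Y)).filter (fun v => ¬ v ∈ X) := by
      ext v
      simp only [hA, Finset.mem_filter, Finset.mem_univ, true_and]
      tauto
    rw [hAY]
    have : (2:ℕ) ^ (k+1) = 2 ^ k * 2 := by rw [pow_succ]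
    omega
  have h2 : ∀ v ∈ A, (S.filter (v ∈ ·)).card = 1 := by
    intro v hv
    rw [hA, Finset.mem_filter] at hv
    exact filter_ext_card_one X k hX v hv.2
  have hdc := double_count A S
  rw [Finset.sum_congr rfl h1, Finset.sum_congr rfl h2] at hdc
  simp only [Finset.sum_const, smul_eq_mul, mul_one] at hdc
  have hAcard : A.card = 256 - 2 ^ k := by
    have hcV : (univ : Finset Vs).card = 256 := by
      rw [Finset.card_univ, Fintype.card_fun]
      simp [ZMod.card]
    rw [hA, Finset.filter_not, Finset.card_sdiff_of_subset (Finset.filter_subset _ _), hcV,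
      card_filter_mem, hX]
  rw [hAcard] at hdc
  have h256 : (2:ℕ) ^ (8 - k) * 2 ^ k = 256 := by
    rw [← pow_add]
    have : 8 - k + k = 8 := by omega
    rw [this]
    norm_num
  have hpos : 0 < (2:ℕ) ^ k := Nat.pow_pos (by norm_num)
  apply Nat.eq_of_mul_eq_mul_right hpos
  rw [hdc, Nat.sub_mul, h256, one_mul]

open Classical in
lemma total_card (L : Fin 17 → Submodule (ZMod 2) Vs)
    (hline : ∀ i, finrank (ZMod 2) (L i) = 2)
    (hspread : ∀ i j, i ≠ j → L i ⊓ L j = ⊥) :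
    (univ.filter (fun v : Vs => v ≠ 0 ∧ ∃ i, v ∈ L i)).card = 51 := by
  have hU : univ.filter (fun v : Vs => v ≠ 0 ∧ ∃ i, v ∈ L i)
      = Finset.univ.biUnion (fun i : Fin 17 => (univ.filter (· ∈ L i)).erase 0) := by
    ext v
    simp only [Finset.mem_filter, Finset.mem_biUnion, Finset.mem_erase, Finset.mem_univ,
      true_and]
    tauto
  rw [hU, Finset.card_biUnion]
  · have hcard : ∀ i : Fin 17, ((univ.filter (· ∈ L i)).erase 0).card = 3 := by
      intro i
      have h0 : (0 : Vs) ∈ univ.filter (· ∈ L i) := by simp [Submodule.zero_mem]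
      rw [Finset.card_erase_of_mem h0, card_filter_mem, hline i]
      norm_num
    simp [hcard]
  · intro i _ j _ hij
    simp only [Finset.disjoint_left, Finset.mem_erase, Finset.mem_filter]
    rintro v ⟨hv0, -, hvi⟩ ⟨-, -, hvj⟩
    have : v ∈ L i ⊓ L j := ⟨hvi, hvj⟩
    rw [hspread i j hij] at this
    exact hv0 this

open Classical in
lemma covered_ncard (L : Fin 17 → Submodule (ZMod 2) Vs) (Y : Submodule (ZMod 2) Vs) :
    (covered L Y).ncard
      = (univ.filter (fun v : Vs => v ≠ 0 ∧ v ∈ Y ∧ ∃ i, v ∈ L i)).card := by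
  rw [← Set.ncard_coe_finset]
  congr 1
  ext v
  simp [covered]

open Classical in
lemma step (L : Fin 17 → Submodule (ZMod 2) Vs)
    (hline : ∀ i, finrank (ZMod 2) (L i) = 2)
    (hspread : ∀ i j, i ≠ j → L i ⊓ L j = ⊥)
    (X : Submodule (ZMod 2) Vs) (k : ℕ) (hk : k ≤ 7) (hX : finrank (ZMod 2) X = k)
    (M : ℕ)
    (hM : ∀ Y : Submodule (ZMod 2) Vs, finrank (ZMod 2) Y = k + 1 →
      (covered L Y).ncard ≤ M) :
    (covered L X).ncard * (2 ^ (8 - k) - 1) + (51 - (covered L X).ncard)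
      ≤ M * (2 ^ (8 - k) - 1) ∧ (covered L X).ncard ≤ 51 := by
  set N := (covered L X).ncard with hN
  set A := univ.filter (fun v : Vs => v ≠ 0 ∧ ∃ i, v ∈ L i) with hA
  set S := univ.filter (fun Y : Submodule (ZMod 2) Vs =>
      X ≤ Y ∧ finrank (ZMod 2) Y = k + 1) with hS
  have hScard : S.card = 2 ^ (8 - k) - 1 := card_exts X k hk hX
  have hAcard : A.card = 51 := total_card L hline hspread
  -- the covered set of X as a filter of A
  have hAX : A.filter (· ∈ X) = univ.filter (fun v : Vs => v ≠ 0 ∧ v ∈ X ∧ ∃ i, v ∈ L i) := by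
    ext v
    simp only [hA, Finset.mem_filter, Finset.mem_univ, true_and]
    tauto
  have hNX : (A.filter (· ∈ X)).card = N := by rw [hAX, hN, covered_ncard]
  have hN51 : N ≤ 51 := by
    rw [← hNX, ← hAcard]
    exact Finset.card_le_card (Finset.filter_subset _ _)
  refine ⟨?_, hN51⟩
  -- upper bound on the sum
  have hsum_le : ∑ Y ∈ S, (A.filter (· ∈ Y)).card ≤ M * S.card := by
    have := Finset.sum_le_card_nsmul S (fun Y => (A.filter (· ∈ Y)).card) M ?_
    · rwa [smul_eq_mul, mul_comm] at this
    · intro Y hY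
      show (A.filter (· ∈ Y)).card ≤ M
      rw [hS, Finset.mem_filter] at hY
      have hAY : A.filter (· ∈ Y)
          = univ.filter (fun v : Vs => v ≠ 0 ∧ v ∈ Y ∧ ∃ i, v ∈ L i) := by
        ext v
        simp only [hA, Finset.mem_filter, Finset.mem_univ, true_and]
        tauto
      rw [hAY, ← covered_ncard]
      exact hM Y hY.2.2
  -- lower bound via double counting
  have hdc := double_count A S
  have hsplit := Finset.sum_filter_add_sum_filter_not A (· ∈ X)
    (fun v => (S.filter (v ∈ ·)).card)
  have hin : ∀ v ∈ A.filter (· ∈ X), (S.filter (v ∈ ·)).card = S.card := by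
    intro v hv
    rw [Finset.mem_filter] at hv
    congr 1
    apply Finset.filter_eq_self.2
    intro Y hY
    rw [hS, Finset.mem_filter] at hY
    exact hY.2.1 hv.2
  have hout : ∀ v ∈ A.filter (fun v => ¬ v ∈ X), (S.filter (v ∈ ·)).card = 1 := by
    intro v hv
    rw [Finset.mem_filter] at hv
    exact filter_ext_card_one X k hX v hv.2
  rw [Finset.sum_congr rfl hin, Finset.sum_congr rfl hout] at hsplit
  simp only [Finset.sum_const, smul_eq_mul, mul_one] at hsplit
  have houtcard : (A.filter (fun v => ¬ v ∈ X)).card = 51 - N := by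
    have := Finset.card_filter_add_card_filter_not (s := A) (p := (· ∈ X))
    omega
  rw [hNX, houtcard] at hsplit
  rw [hdc, ← hsplit, hScard] at hsum_le
  exact hsum_le


/-- Given 17 pairwise disjoint lines in `PG(7,2)` such that every hyperplane
contains at most 5 of them and at most 27 of the 51 covered points, every
`V₆` contains at most 15 covered points, every `V₅` at most 9, every `V₄` at
most 6 and every `V₃` at most 4. -/
theorem covered_points_in_subspaces
    (L : Fin 17 → Submodule (ZMod 2) (Fin 8 → ZMod 2))
    (hline : ∀ i, Module.finrank (ZMod 2) (L i) = 2)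
    (hspread : ∀ i j, i ≠ j → L i ⊓ L j = ⊥)
    (hcode : ∀ H : Submodule (ZMod 2) (Fin 8 → ZMod 2),
      Module.finrank (ZMod 2) H = 7 → {i : Fin 17 | L i ≤ H}.ncard ≤ 5)
    (hhyp : ∀ H : Submodule (ZMod 2) (Fin 8 → ZMod 2),
      Module.finrank (ZMod 2) H = 7 → (covered L H).ncard ≤ 27) :
    ∀ X : Submodule (ZMod 2) (Fin 8 → ZMod 2),
      (Module.finrank (ZMod 2) X = 6 → (covered L X).ncard ≤ 15) ∧
      (Module.finrank (ZMod 2) X = 5 → (covered L X).ncard ≤ 9) ∧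
      (Module.finrank (ZMod 2) X = 4 → (covered L X).ncard ≤ 6) ∧
      (Module.finrank (ZMod 2) X = 3 → (covered L X).ncard ≤ 4) := by
  have h6 : ∀ X : Submodule (ZMod 2) Vs, finrank (ZMod 2) X = 6 →
      (covered L X).ncard ≤ 15 := by
    intro X hX
    have := step L hline hspread X 6 (by norm_num) hX 27
      (fun Y hY => hhyp Y (hY.trans (by norm_num)))
    norm_num at this
    omega
  have h5 : ∀ X : Submodule (ZMod 2) Vs, finrank (ZMod 2) X = 5 →
      (covered L X).ncard ≤ 9 := by
    intro X hX
    have := step L hline hspread X 5 (by norm_num) hX 15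
      (fun Y hY => h6 Y (hY.trans (by norm_num)))
    norm_num at this
    omega
  have h4 : ∀ X : Submodule (ZMod 2) Vs, finrank (ZMod 2) X = 4 →
      (covered L X).ncard ≤ 6 := by
    intro X hX
    have := step L hline hspread X 4 (by norm_num) hX 9
      (fun Y hY => h5 Y (hY.trans (by norm_num)))
    norm_num at this
    omega
  have h3 : ∀ X : Submodule (ZMod 2) Vs, finrank (ZMod 2) X = 3 →
      (covered L X).ncard ≤ 4 := by
    intro X hX
    have := step L hline hspread X 3 (by norm_num) hX 6
      (fun Y hY => h4 Y (hY.trans (by norm_num)))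
    norm_num at this
    omega
  exact fun X => ⟨h6 X, h5 X, h4 X, h3 X⟩
end

section
/- An additive quaternary [12,6,6]_4 code whose weight distribution is A_0=1, A_6=396, A_8=1485, A_10=1980, A_12=234 is self-dual with respect to the symplectic (trace) inner product on (F_2^2)^{12}, and hence is a quantum stabilizer [[12,0,6]]_2 code. -/
/-- `A C i` is the number of codewords of weight `i` in `C`. -/
noncomputable def A {n : ℕ} (C : Submodule (ZMod 2) (Fin n → ZMod 2 × ZMod 2)) (i : ℕ) : ℕ :=
  {x : Fin n → ZMod 2 × ZMod 2 | x ∈ C ∧ qWt x = i}.ncard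

/-- The symplectic (trace) inner product on `(𝔽₂²)ⁿ`. -/
def symp {n : ℕ} (x y : Fin n → ZMod 2 × ZMod 2) : ZMod 2 :=
  ∑ i, ((x i).1 * (y i).2 + (x i).2 * (y i).1)

open Finset

section Weight

variable {n : ℕ}

lemma qWt_eq_card_filter (x : Fin n → ZMod 2 × ZMod 2) : qWt x = #{i | x i ≠ 0} := by
  classical
  rw [qWt, Set.ncard_eq_toFinset_card', Set.toFinset_ofPred]

lemma qWt_le (x : Fin n → ZMod 2 × ZMod 2) : qWt x ≤ n := by
  classical
  simpa [qWt_eq_card_filter] using card_filter_le univ (fun i => x i ≠ 0)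

lemma natCast_qWt (x : Fin n → ZMod 2 × ZMod 2) :
    (qWt x : ZMod 2) = ∑ i, if x i ≠ 0 then 1 else 0 := by
  classical
  rw [qWt_eq_card_filter, card_filter]
  push_cast
  rfl

lemma natCast_qWt_add (x y : Fin n → ZMod 2 × ZMod 2) :
    (qWt (x + y) : ZMod 2) = qWt x + qWt y + symp x y := by
  have coord : ∀ a b : ZMod 2 × ZMod 2,
      (if a + b ≠ 0 then (1 : ZMod 2) else 0) =
        (if a ≠ 0 then 1 else 0) + (if b ≠ 0 then 1 else 0) + (a.1 * b.2 + a.2 * b.1) := by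
    decide
  simp only [natCast_qWt, symp, ← sum_add_distrib]
  exact sum_congr rfl fun i _ => coord (x i) (y i)

end Weight

section WeightDistribution

variable {n : ℕ} (C : Submodule (ZMod 2) (Fin n → ZMod 2 × ZMod 2))

lemma natCard_eq_sum_A : Nat.card C = ∑ i ∈ range (n + 1), A C i := by
  classical
  rw [Nat.card_eq_fintype_card, Fintype.card_subtype,
    card_eq_sum_card_fiberwise (f := qWt) fun x _ => mem_range.2 (Nat.lt_succ_of_le (qWt_le x))]
  refine sum_congr rfl fun i _ => ?_
  rw [A, Set.ncard_eq_toFinset_card', Set.toFinset_ofPred, filter_filter]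

lemma A_qWt_pos {x : Fin n → ZMod 2 × ZMod 2} (hx : x ∈ C) : 0 < A C (qWt x) :=
  (Set.ncard_pos (Set.toFinite _)).2 ⟨x, hx, rfl⟩

lemma even_qWt_of_A_odd_eq_zero (h : ∀ i ≤ n, Odd i → A C i = 0) {x} (hx : x ∈ C) :
    Even (qWt x) := by
  by_contra hodd
  exact (A_qWt_pos C hx).ne' (h _ (qWt_le x) (Nat.not_even_iff_odd.1 hodd))

end WeightDistribution

section SymplecticForm

variable {n : ℕ}

def sympForm : LinearMap.BilinForm (ZMod 2) (Fin n → ZMod 2 × ZMod 2) := by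
  refine LinearMap.mk₂ (ZMod 2) symp ?_ ?_ ?_ ?_ <;> intros <;>
    simp only [symp, Pi.add_apply, Pi.smul_apply, Prod.fst_add, Prod.snd_add, Prod.smul_fst,
      Prod.smul_snd, smul_eq_mul, mul_sum, ← sum_add_distrib] <;>
    exact sum_congr rfl fun _ _ => by ring

@[simp]
lemma sympForm_apply (x y : Fin n → ZMod 2 × ZMod 2) : sympForm x y = symp x y := rfl

lemma sympForm_isSymm : (sympForm (n := n)).IsSymm :=
  ⟨fun x y => by
    simp only [sympForm_apply, symp]
    exact sum_congr rfl fun i _ => by ring⟩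

lemma sympForm_nondegenerate : (sympForm (n := n)).Nondegenerate := by
  refine (sympForm_isSymm.isRefl.nondegenerate_iff_separatingLeft).2 fun x hx => ?_
  by_contra hne
  obtain ⟨i, hi⟩ : ∃ i, x i ≠ 0 := Function.ne_iff.1 hne
  have witness : ∀ a : ZMod 2 × ZMod 2, a ≠ 0 → ∃ b : ZMod 2 × ZMod 2, a.1 * b.2 + a.2 * b.1 = 1 := by
    decide
  obtain ⟨b, hb⟩ := witness (x i) hi
  have h := hx (Pi.single i b)
  rw [sympForm_apply, symp, Fintype.sum_eq_single i fun j hj => by simp [Pi.single_eq_of_ne hj],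
    Pi.single_eq_same, hb] at h
  exact one_ne_zero h

lemma le_orthogonal_of_even_qWt {C : Submodule (ZMod 2) (Fin n → ZMod 2 × ZMod 2)}
    (heven : ∀ x ∈ C, Even (qWt x)) : C ≤ sympForm.orthogonal C := by
  intro y hy
  rw [LinearMap.BilinForm.mem_orthogonal_iff]
  intro x hx
  have h := natCast_qWt_add x y
  simp only [(ZMod.natCast_eq_zero_iff_even).2 (heven _ _), hx, hy, C.add_mem, zero_add] at h
  rw [sympForm_apply, ← h]

lemma eq_orthogonal_of_le_orthogonal {C : Submodule (ZMod 2) (Fin n → ZMod 2 × ZMod 2)}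
    (hle : C ≤ sympForm.orthogonal C) (hdim : Module.finrank (ZMod 2) C = n) :
    C = sympForm.orthogonal C := by
  refine Submodule.eq_of_le_of_finrank_le hle ?_
  rw [LinearMap.BilinForm.finrank_orthogonal sympForm_nondegenerate, hdim]
  simp only [Module.finrank_pi_fintype, Module.finrank_prod, Module.finrank_self, sum_const,
    card_univ, Fintype.card_fin, smul_eq_mul]
  omega

end SymplecticForm

theorem quantum_case_is_selfdual_general
    (C : Submodule (ZMod 2) (Fin 12 → ZMod 2 × ZMod 2))
    (hdim : Module.finrank (ZMod 2) C = 12)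
    (hwd : A C 0 = 1 ∧ A C 6 = 396 ∧ A C 8 = 1485 ∧ A C 10 = 1980 ∧ A C 12 = 234) :
    ∀ y, y ∈ C ↔ ∀ x ∈ C, symp x y = 0 := by
  have hcard : Nat.card C = 4096 := by
    rw [Module.natCard_eq_pow_finrank (K := ZMod 2), hdim, Nat.card_zmod]
    norm_num
  have hsum := natCard_eq_sum_A C
  simp only [hcard, sum_range_succ, sum_range_zero] at hsum
  have hodd : ∀ i ≤ 12, Odd i → A C i = 0 := by
    intro i hi hi_odd
    rw [Nat.odd_iff] at hi_odd
    interval_cases i <;> omega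
  have hselfdual := eq_orthogonal_of_le_orthogonal
    (le_orthogonal_of_even_qWt fun _ => even_qWt_of_A_odd_eq_zero C hodd) hdim
  exact fun y => (SetLike.ext_iff.1 hselfdual y).trans LinearMap.BilinForm.mem_orthogonal_iff

/-- An additive `[12,6,6]₄` code whose weight distribution is
`A₀=1, A₆=396, A₈=1485, A₁₀=1980, A₁₂=234` is self-dual with respect to the
symplectic inner product (hence is a quantum `[[12,0,6]]₂` stabilizer code). -/
theorem quantum_case_is_selfdual
    (C : Submodule (ZMod 2) (Fin 12 → ZMod 2 × ZMod 2))
    (hdim : Module.finrank (ZMod 2) C = 12)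
    (hd : ∀ x ∈ C, x ≠ 0 → 6 ≤ qWt x)
    (hwd : A C 0 = 1 ∧ A C 6 = 396 ∧ A C 8 = 1485 ∧ A C 10 = 1980 ∧ A C 12 = 234) :
    ∀ y, y ∈ C ↔ ∀ x ∈ C, symp x y = 0 :=
  quantum_case_is_selfdual_general C hdim hwd
end

section
/- In an additive [17,4,12]_4 code, no codeline degenerates to a point and no two codelines intersect: the 17 codelines form a partial spread of lines in PG(7,2). -/
/-- The `i`-th codeline of an additive code `C`, living in the binary dual space
of `C` (this is the span of the two columns of a generator matrix of `C`
belonging to coordinate `i`): the range of the dual of the evaluation map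
`C → 𝔽₂²` at coordinate `i`. -/
noncomputable def codeline {n : ℕ} (C : Submodule (ZMod 2) (Fin n → ZMod 2 × ZMod 2))
    (i : Fin n) : Submodule (ZMod 2) (Module.Dual (ZMod 2) C) :=
  LinearMap.range (((LinearMap.proj i).comp C.subtype).dualMap)

open Finset Module

theorem AddMonoidHom.card_mul_card_ne_zero_le {G A : Type*} [AddGroup G] [Fintype G] [AddGroup A]
    [Finite A] [DecidableEq A] (f : G →+ A) :
    Nat.card A * #{x | f x ≠ 0} ≤ (Nat.card A - 1) * Fintype.card G := by
  have hker : #{x | f x = 0} = Nat.card f.ker := by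
    rw [← Fintype.card_subtype, ← Nat.card_eq_fintype_card]; rfl
  have hG : Fintype.card G ≤ Nat.card A * #{x | f x = 0} := by
    rw [hker, ← Nat.card_eq_fintype_card, ← f.ker.card_mul_index, AddSubgroup.index_ker, mul_comm]
    exact Nat.mul_le_mul_right _ (Nat.card_le_card_of_injective _ Subtype.val_injective)
  have hsplit : #{x | f x = 0} + #{x | f x ≠ 0} = Fintype.card G :=
    card_filter_add_card_filter_not _
  rw [← hsplit] at hG ⊢
  rw [Nat.sub_mul, one_mul, Nat.mul_add]
  omega

theorem AddSubgroup.plotkin_bound {ι A : Type*} [Fintype ι] [AddGroup A] [Finite A] [DecidableEq A]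
    (D : AddSubgroup (ι → A)) (s : Finset ι) (hs : ∀ x ∈ D, ∀ i ∉ s, x i = 0) (δ : ℕ)
    (hδ : ∀ x ∈ D, x ≠ 0 → δ ≤ hammingNorm x) :
    Nat.card A * δ * (Nat.card D - 1) ≤ (Nat.card A - 1) * #s * Nat.card D := by
  have : Fintype D := Fintype.ofFinite D
  set q := Nat.card A
  let nz (i : ι) := #{x : D | (x : ι → A) i ≠ 0}
  have hsum : ∑ x : D, hammingNorm (x : ι → A) = ∑ i ∈ s, nz i := by
    have hout (i : ι) (hi : i ∉ s) : nz i = 0 :=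
      card_eq_zero.2 <| filter_eq_empty_iff.2 fun x _ => not_not.2 (hs x x.2 i hi)
    rw [sum_subset (subset_univ s) fun i _ hi => hout i hi]
    simp only [hammingNorm, nz, card_filter]
    exact sum_comm
  have hlow : δ * (Nat.card D - 1) ≤ ∑ x : D, hammingNorm (x : ι → A) :=
    calc δ * (Nat.card D - 1) = ∑ _x ∈ univ.erase (0 : D), δ := by
          rw [sum_const, card_erase_of_mem (mem_univ _), card_univ, Nat.card_eq_fintype_card,
            smul_eq_mul, mul_comm]
      _ ≤ ∑ x ∈ univ.erase (0 : D), hammingNorm (x : ι → A) :=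
          sum_le_sum fun x hx => hδ x x.2 (by simpa using ne_of_mem_erase hx)
      _ ≤ ∑ x : D, hammingNorm (x : ι → A) := sum_le_sum_of_subset (subset_univ _)
  have hcoord (i : ι) : q * nz i ≤ (q - 1) * Nat.card D := by
    rw [Nat.card_eq_fintype_card]
    exact ((Pi.evalAddMonoidHom (fun _ => A) i).comp D.subtype).card_mul_card_ne_zero_le
  calc q * δ * (Nat.card D - 1) ≤ ∑ i ∈ s, q * nz i := by
        rw [mul_assoc, ← mul_sum, ← hsum]; exact Nat.mul_le_mul_left _ hlow
    _ ≤ ∑ _i ∈ s, (q - 1) * Nat.card D := sum_le_sum fun i _ => hcoord i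
    _ = (q - 1) * #s * Nat.card D := by rw [sum_const, smul_eq_mul]; ring

theorem qWt_eq_hammingNorm {n : ℕ} (x : Fin n → ZMod 2 × ZMod 2) : qWt x = hammingNorm x := by
  rw [qWt, hammingNorm, Set.ncard_eq_toFinset_card']
  simp

theorem LinearMap.range_dualMap_inf_range_dualMap_eq_bot_iff {K V W W' : Type*} [Field K]
    [AddCommGroup V] [Module K V] [AddCommGroup W] [Module K W] [AddCommGroup W'] [Module K W']
    (f : V →ₗ[K] W) (g : V →ₗ[K] W') :
    range f.dualMap ⊓ range g.dualMap = ⊥ ↔ ker f ⊔ ker g = ⊤ := by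
  rw [range_dualMap_eq_dualAnnihilator_ker, range_dualMap_eq_dualAnnihilator_ker,
    ← Submodule.dualAnnihilator_sup_eq, Submodule.dualAnnihilator_eq_bot_iff]

theorem finrank_le_four_of_apply_eq_zero {C D : Submodule (ZMod 2) (Fin 17 → ZMod 2 × ZMod 2)}
    (hd : ∀ x ∈ C, x ≠ 0 → 12 ≤ qWt x) (hDC : D ≤ C) {i j : Fin 17} (hij : i ≠ j)
    (hD : ∀ x ∈ D, x i = 0 ∧ x j = 0) : finrank (ZMod 2) D ≤ 4 := by
  have hplotkin := D.toAddSubgroup.plotkin_bound {i, j}ᶜ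
    (fun x hx k hk => by
      obtain rfl | rfl : k = i ∨ k = j := by simpa [or_iff_not_imp_left] using hk
      exacts [(hD x hx).1, (hD x hx).2])
    12 (fun x hx hx0 => qWt_eq_hammingNorm x ▸ hd x (hDC hx) hx0)
  have hcard : Nat.card D.toAddSubgroup = 2 ^ finrank (ZMod 2) D := by
    simpa using Module.natCard_eq_pow_finrank (K := ZMod 2) (V := D)
  have hs : #({i, j}ᶜ : Finset (Fin 17)) = 15 := by rw [card_compl, card_pair hij]; rfl
  -- Plotkin with `q = 4`, `δ = 12`, `n = 15`: `48 (2 ^ d - 1) ≤ 45 * 2 ^ d` forces `2 ^ d ≤ 16`.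
  rw [hcard, hs] at hplotkin
  simp only [Nat.card_prod, Nat.card_zmod] at hplotkin
  by_contra! h
  have : 2 ^ 5 ≤ 2 ^ finrank (ZMod 2) D := Nat.pow_le_pow_right (by norm_num) h
  omega

noncomputable def coordMap {n : ℕ} (C : Submodule (ZMod 2) (Fin n → ZMod 2 × ZMod 2))
    (i : Fin n) : C →ₗ[ZMod 2] ZMod 2 × ZMod 2 :=
  (LinearMap.proj i).comp C.subtype

theorem codeline_eq_range_dualMap {n : ℕ} (C : Submodule (ZMod 2) (Fin n → ZMod 2 × ZMod 2))
    (i : Fin n) : codeline C i = LinearMap.range (coordMap C i).dualMap :=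
  rfl

theorem finrank_range_coordMap_le_two {n : ℕ} (C : Submodule (ZMod 2) (Fin n → ZMod 2 × ZMod 2))
    (i : Fin n) : finrank (ZMod 2) (LinearMap.range (coordMap C i)) ≤ 2 := by
  simpa using Submodule.finrank_le (LinearMap.range (coordMap C i))

theorem finrank_le_finrank_ker_coordMap_add_two {n : ℕ}
    (C : Submodule (ZMod 2) (Fin n → ZMod 2 × ZMod 2)) (i : Fin n) :
    finrank (ZMod 2) C ≤ finrank (ZMod 2) (LinearMap.ker (coordMap C i)) + 2 := by
  rw [← LinearMap.finrank_range_add_finrank_ker (coordMap C i)]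
  have := finrank_range_coordMap_le_two C i
  omega

theorem finrank_ker_coordMap_inf_le_four {C : Submodule (ZMod 2) (Fin 17 → ZMod 2 × ZMod 2)}
    (hd : ∀ x ∈ C, x ≠ 0 → 12 ≤ qWt x) {i j : Fin 17} (hij : i ≠ j) :
    finrank (ZMod 2) (LinearMap.ker (coordMap C i) ⊓ LinearMap.ker (coordMap C j) :
      Submodule (ZMod 2) C) ≤ 4 := by
  rw [← Submodule.finrank_map_subtype_eq]
  refine finrank_le_four_of_apply_eq_zero hd (Submodule.map_subtype_le _ _) hij ?_
  rintro _ ⟨x, ⟨hxi, hxj⟩, rfl⟩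
  exact ⟨hxi, hxj⟩

theorem ker_coordMap_sup_eq_top {C : Submodule (ZMod 2) (Fin 17 → ZMod 2 × ZMod 2)}
    (hdim : finrank (ZMod 2) C = 8) (hd : ∀ x ∈ C, x ≠ 0 → 12 ≤ qWt x) {i j : Fin 17}
    (hij : i ≠ j) : LinearMap.ker (coordMap C i) ⊔ LinearMap.ker (coordMap C j) = ⊤ := by
  apply Submodule.eq_top_of_finrank_eq
  have := Submodule.finrank_sup_add_finrank_inf_eq (LinearMap.ker (coordMap C i))
    (LinearMap.ker (coordMap C j))
  have := Submodule.finrank_le (LinearMap.ker (coordMap C i) ⊔ LinearMap.ker (coordMap C j))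
  have := finrank_ker_coordMap_inf_le_four hd hij
  have := finrank_le_finrank_ker_coordMap_add_two C i
  have := finrank_le_finrank_ker_coordMap_add_two C j
  omega

theorem finrank_range_coordMap_eq_two {C : Submodule (ZMod 2) (Fin 17 → ZMod 2 × ZMod 2)}
    (hdim : finrank (ZMod 2) C = 8) (hd : ∀ x ∈ C, x ≠ 0 → 12 ≤ qWt x) (i : Fin 17) :
    finrank (ZMod 2) (LinearMap.range (coordMap C i)) = 2 := by
  obtain ⟨j, hji⟩ := exists_ne i
  have hdims := Submodule.finrank_sup_add_finrank_inf_eq (LinearMap.ker (coordMap C i))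
    (LinearMap.ker (coordMap C j))
  rw [ker_coordMap_sup_eq_top hdim hd hji.symm, finrank_top, hdim] at hdims
  have := finrank_ker_coordMap_inf_le_four hd hji.symm
  have := finrank_le_finrank_ker_coordMap_add_two C j
  have := LinearMap.finrank_range_add_finrank_ker (coordMap C i)
  have := finrank_range_coordMap_le_two C i
  omega

/-- In an additive `[17,4,12]₄` code no codeline degenerates to a point and no
two codelines intersect: the 17 codelines form a partial spread of lines in
`PG(7,2)`. -/
theorem codelines_form_partial_spread
    (C : Submodule (ZMod 2) (Fin 17 → ZMod 2 × ZMod 2))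
    (hdim : Module.finrank (ZMod 2) C = 8)
    (hd : ∀ x ∈ C, x ≠ 0 → 12 ≤ qWt x) :
    (∀ i, Module.finrank (ZMod 2) (codeline C i) = 2) ∧
    (∀ i j, i ≠ j → codeline C i ⊓ codeline C j = ⊥) := by
  refine ⟨fun i => ?_, fun i j hij => ?_⟩
  · rw [codeline_eq_range_dualMap, LinearMap.finrank_range_dualMap_eq_finrank_range]
    exact finrank_range_coordMap_eq_two hdim hd i
  · rw [codeline_eq_range_dualMap, codeline_eq_range_dualMap,
      LinearMap.range_dualMap_inf_range_dualMap_eq_bot_iff]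
    exact ker_coordMap_sup_eq_top hdim hd hij
end

section
/- There exists an additive quaternary [22,17.5,4]_4 code, i.e., a 35-dimensional F_2-subspace of (F_2^2)^{22} with minimum weight 4; equivalently, there exists a family of 22 lines in PG(8,2) of strength 3. -/
namespace Add22
/-- first points of the 22 lines in `PG(8,2)`, as 9-bit masks -/
def uN : Fin 22 → ℕ :=
  ![466,402,493,92,495,200,463,243,51,330,276,329,238,47,181,80,453,18,499,4,401,451]
/-- second points of the 22 lines -/
def vN : Fin 22 → ℕ :=
  ![479,151,14,297,365,129,41,160,319,1,485,501,105,408,56,27,343,205,413,183,389,244]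

/-- the three nonzero points of line `i` -/
def ptsN (i : Fin 22) : List ℕ := [uN i, vN i, uN i ^^^ vN i]

lemma lt512 : ∀ i : Fin 22, uN i < 512 ∧ vN i < 512 := by decide

lemma good1 : ∀ i : Fin 22, ∀ p ∈ ptsN i, p ≠ 0 := by decide

lemma good2 : ∀ i j : Fin 22, i ≠ j → ∀ p ∈ ptsN i, ∀ q ∈ ptsN j, p ^^^ q ≠ 0 := by decide

/-- the lines as a list -/
def lineList : List (ℕ × ℕ) :=
  [(466,479),(402,151),(493,14),(92,297),(495,365),(200,129),(463,41),(243,160),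
   (51,319),(330,1),(276,485),(329,501),(238,105),(47,408),(181,56),(80,27),
   (453,343),(18,205),(499,413),(4,183),(401,389),(451,244)]

def pts3 (l : ℕ × ℕ) : List ℕ := [l.1, l.2, l.1 ^^^ l.2]

def chkT (l1 l2 l3 : ℕ × ℕ) : Bool :=
  (pts3 l1).all fun p => (pts3 l2).all fun q => (pts3 l3).all fun r => p ^^^ q ^^^ r != 0

def chk2 (l1 : ℕ × ℕ) : List (ℕ × ℕ) → Bool
  | [] => true
  | l2 :: rest => rest.all (chkT l1 l2) && chk2 l1 rest

def chk3 : List (ℕ × ℕ) → Bool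
  | [] => true
  | l :: rest => chk2 l rest && chk3 rest

lemma chk3_lineList : chk3 lineList = true := by decide

lemma chk2_spec : ∀ (l1 : ℕ × ℕ) (L : List (ℕ × ℕ)), chk2 l1 L = true →
    ∀ (j k : ℕ) (hj : j < L.length) (hk : k < L.length), j < k →
    chkT l1 L[j] L[k] = true := by
  intro l1 L
  induction L with
  | nil => intro _ j k _ hk; exact absurd hk (by simp)
  | cons l2 rest ih =>
    intro h j k hj hk hjk
    have h' : rest.all (chkT l1 l2) = true ∧ chk2 l1 rest = true := by
      simpa [chk2, Bool.and_eq_true] using h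
    match j, k with
    | 0, k + 1 =>
      have hk' : k < rest.length := by simpa using hk
      have := List.all_eq_true.mp h'.1 rest[k] (List.getElem_mem hk')
      simpa using this
    | j + 1, k + 1 =>
      have hj' : j < rest.length := by simpa using hj
      have hk' : k < rest.length := by simpa using hk
      have := ih h'.2 j k hj' hk' (by omega)
      simpa using this

lemma chk3_spec : ∀ (L : List (ℕ × ℕ)), chk3 L = true →
    ∀ (i j k : ℕ) (hi : i < L.length) (hj : j < L.length) (hk : k < L.length),
    i < j → j < k → chkT L[i] L[j] L[k] = true := by
  intro L
  induction L with
  | nil => intro _ i j k hi; exact absurd hi (by simp)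
  | cons l rest ih =>
    intro h i j k hi hj hk hij hjk
    have h' : chk2 l rest = true ∧ chk3 rest = true := by
      simpa [chk3, Bool.and_eq_true] using h
    match i, j, k with
    | 0, j + 1, k + 1 =>
      have hj' : j < rest.length := by simpa using hj
      have hk' : k < rest.length := by simpa using hk
      have := chk2_spec l rest h'.1 j k hj' hk' (by omega)
      simpa using this
    | i + 1, j + 1, k + 1 =>
      have hi' : i < rest.length := by simpa using hi
      have hj' : j < rest.length := by simpa using hj
      have hk' : k < rest.length := by simpa using hk
      have := ih h'.2 i j k hi' hj' hk' (by omega) (by omega)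
      simpa using this

lemma lineList_get : ∀ i : Fin 22, ∀ h : (i : ℕ) < lineList.length,
    lineList[(i : ℕ)] = (uN i, vN i) := by decide

lemma ptsN_eq (i : Fin 22) (h : (i : ℕ) < lineList.length) :
    ptsN i = pts3 (lineList[(i : ℕ)]) := by
  rw [lineList_get i h]; rfl

lemma lineList_len : lineList.length = 22 := by rfl

lemma good3' : ∀ i j k : Fin 22, i < j → j < k →
    ∀ p ∈ ptsN i, ∀ q ∈ ptsN j, ∀ r ∈ ptsN k, p ^^^ q ^^^ r ≠ 0 := by
  intro i j k hij hjk p hp q hq r hr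
  have hi : (i : ℕ) < lineList.length := by rw [lineList_len]; exact i.isLt
  have hj : (j : ℕ) < lineList.length := by rw [lineList_len]; exact j.isLt
  have hk : (k : ℕ) < lineList.length := by rw [lineList_len]; exact k.isLt
  have hT := chk3_spec lineList chk3_lineList i j k hi hj hk hij hjk
  rw [lineList_get i hi, lineList_get j hj, lineList_get k hk] at hT
  simp only [chkT, List.all_eq_true] at hT
  have hp' : p ∈ pts3 (uN i, vN i) := hp
  have hq' : q ∈ pts3 (uN j, vN j) := hq
  have hr' : r ∈ pts3 (uN k, vN k) := hr
  have := hT p hp' q hq' r hr'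
  simpa using this

lemma good3 : ∀ i j k : Fin 22, i ≠ j → i ≠ k → j ≠ k →
    ∀ p ∈ ptsN i, ∀ q ∈ ptsN j, ∀ r ∈ ptsN k, p ^^^ q ^^^ r ≠ 0 := by
  intro i j k hij hik hjk p hp q hq r hr
  have xc : ∀ a b c : ℕ, a ^^^ b ^^^ c = b ^^^ a ^^^ c := by
    intro a b c; rw [Nat.xor_comm a b]
  have xr : ∀ a b c : ℕ, a ^^^ b ^^^ c = a ^^^ c ^^^ b := by
    intro a b c; rw [Nat.xor_assoc, Nat.xor_comm b c, ← Nat.xor_assoc]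
  rcases lt_trichotomy i j with h1 | h1 | h1
  · rcases lt_trichotomy j k with h2 | h2 | h2
    · exact good3' i j k h1 h2 p hp q hq r hr
    · exact absurd h2 hjk
    · rcases lt_trichotomy i k with h3 | h3 | h3
      · -- i < k < j
        have := good3' i k j h3 h2 p hp r hr q hq
        rw [xr] at this; exact this
      · exact absurd h3 hik
      · -- k < i < j
        have := good3' k i j h3 h1 r hr p hp q hq
        rw [xc, xr] at this; exact this
  · exact absurd h1 hij
  · rcases lt_trichotomy i k with h2 | h2 | h2
    · -- j < i < k
      have := good3' j i k h1 h2 q hq p hp r hr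
      rw [xc] at this; exact this
    · exact absurd h2 hik
    · rcases lt_trichotomy j k with h3 | h3 | h3
      · -- j < k < i
        have := good3' j k i h3 h2 q hq r hr p hp
        rw [xr, xc] at this; exact this
      · exact absurd h3 hjk
      · -- k < j < i
        have := good3' k j i h3 h1 r hr q hq p hp
        rw [xc, xr, xc] at this; exact this

/-- a 9-bit mask as a vector in `𝔽₂⁹` -/
def toVec (m : ℕ) : Fin 9 → ZMod 2 := fun r => if m.testBit r then 1 else 0

lemma toVec_xor (a b : ℕ) : toVec (a ^^^ b) = toVec a + toVec b := by
  funext r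
  simp only [toVec, Nat.testBit_xor, Pi.add_apply]
  cases ha : a.testBit r <;> cases hb : b.testBit r <;> simp <;> decide

lemma ptsN_lt (i : Fin 22) : ∀ p ∈ ptsN i, p < 512 := by
  intro p hp
  have h1 := (lt512 i).1
  have h2 := (lt512 i).2
  have hx : uN i ^^^ vN i < 512 := by
    have : (512 : ℕ) = 2 ^ 9 := rfl
    rw [this] at h1 h2 ⊢
    apply Nat.lt_pow_two_of_testBit
    intro j hj
    rw [Nat.testBit_xor]
    have hb1 : (uN i).testBit j = false :=
      Nat.testBit_lt_two_pow (lt_of_lt_of_le h1 (Nat.pow_le_pow_right (by norm_num) hj))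
    have hb2 : (vN i).testBit j = false :=
      Nat.testBit_lt_two_pow (lt_of_lt_of_le h2 (Nat.pow_le_pow_right (by norm_num) hj))
    simp [hb1, hb2]
  simp only [ptsN, List.mem_cons, List.mem_singleton, List.not_mem_nil, or_false] at hp
  rcases hp with rfl | rfl | rfl <;> assumption

lemma toVec_eq_zero {m : ℕ} (hm : m < 512) (h : toVec m = 0) : m = 0 := by
  apply Nat.eq_of_testBit_eq
  intro j
  rw [Nat.zero_testBit]
  by_cases hj : j < 9
  · have h2 := congrFun h ⟨j, hj⟩
    simp only [toVec, Pi.zero_apply] at h2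
    by_cases hb : m.testBit j
    · rw [if_pos hb] at h2
      exact absurd h2 one_ne_zero
    · simpa using hb
  · have hm' : m < 2 ^ 9 := hm
    exact Nat.testBit_lt_two_pow (lt_of_lt_of_le hm'
      (Nat.pow_le_pow_right (by norm_num) (not_lt.mp hj)))

/-- the contribution of coordinate `i` to the syndrome -/
noncomputable def g (i : Fin 22) : (ZMod 2 × ZMod 2) →ₗ[ZMod 2] (Fin 9 → ZMod 2) :=
  (LinearMap.fst (ZMod 2) (ZMod 2) (ZMod 2)).smulRight (toVec (uN i)) +
  (LinearMap.snd (ZMod 2) (ZMod 2) (ZMod 2)).smulRight (toVec (vN i))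

lemma g_apply (i : Fin 22) (a : ZMod 2 × ZMod 2) :
    g i a = a.1 • toVec (uN i) + a.2 • toVec (vN i) := rfl

/-- the parity-check (syndrome) map -/
noncomputable def L : (Fin 22 → ZMod 2 × ZMod 2) →ₗ[ZMod 2] (Fin 9 → ZMod 2) :=
  ∑ i, (g i).comp (LinearMap.proj i)

lemma L_apply (x : Fin 22 → ZMod 2 × ZMod 2) : L x = ∑ i, g i (x i) := by
  simp [L, LinearMap.sum_apply]

lemma g_mem (i : Fin 22) (a : ZMod 2 × ZMod 2) (ha : a ≠ 0) :
    ∃ p ∈ ptsN i, g i a = toVec p := by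
  have h : a = (0,1) ∨ a = (1,0) ∨ a = (1,1) := by revert ha; revert a; decide
  rcases h with rfl | rfl | rfl
  · exact ⟨vN i, by simp [ptsN], by simp [g_apply]⟩
  · exact ⟨uN i, by simp [ptsN], by simp [g_apply]⟩
  · exact ⟨uN i ^^^ vN i, by simp [ptsN], by simp [g_apply, toVec_xor]⟩

lemma L_single (i : Fin 22) (a : ZMod 2 × ZMod 2) : L (Pi.single i a) = g i a := by
  rw [L_apply, Finset.sum_eq_single_of_mem i (Finset.mem_univ i)
    (fun j _ hj => by rw [Pi.single_eq_of_ne hj, map_zero]), Pi.single_eq_same]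

lemma ker_weight (x : Fin 22 → ZMod 2 × ZMod 2) (hx : L x = 0) (hne : x ≠ 0) :
    4 ≤ qWt x := by
  by_contra hlt
  push_neg at hlt
  classical
  set S : Finset (Fin 22) := Finset.univ.filter (fun i => x i ≠ 0) with hS
  have hqS : qWt x = S.card := by
    have : {i | x i ≠ 0} = (S : Set (Fin 22)) := by ext i; simp [hS]
    rw [qWt, this, Set.ncard_coe_finset]
  have hmemS : ∀ i ∈ S, x i ≠ 0 := by
    intro i hi
    exact (Finset.mem_filter.mp hi).2
  have hsum : ∑ i ∈ S, g i (x i) = 0 := by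
    rw [← hx, L_apply]
    apply Finset.sum_filter_of_ne
    intro i _ hgi
    intro hxi
    exact hgi (by rw [hxi, map_zero])
  have hSne : S.Nonempty := by
    rcases Function.ne_iff.mp hne with ⟨i, hi⟩
    exact ⟨i, Finset.mem_filter.mpr ⟨Finset.mem_univ i, by simpa using hi⟩⟩
  have hcard : S.card ≤ 3 := by omega
  have h1le : 1 ≤ S.card := Finset.card_pos.mpr hSne
  have hc : S.card = 1 ∨ S.card = 2 ∨ S.card = 3 := by omega
  rcases hc with h | h | h
  · -- card 1
    obtain ⟨a, ha⟩ := Finset.card_eq_one.mp h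
    rw [ha, Finset.sum_singleton] at hsum
    have hxa := hmemS a (by simp [ha])
    obtain ⟨p, hp, hgp⟩ := g_mem a (x a) hxa
    rw [hgp] at hsum
    exact good1 a p hp (toVec_eq_zero (ptsN_lt a p hp) hsum)
  · -- card 2
    obtain ⟨a, b, hab, hab2⟩ := Finset.card_eq_two.mp h
    rw [hab2, Finset.sum_pair hab] at hsum
    have hxa := hmemS a (by simp [hab2])
    have hxb := hmemS b (by simp [hab2])
    obtain ⟨p, hp, hgp⟩ := g_mem a (x a) hxa
    obtain ⟨q, hq, hgq⟩ := g_mem b (x b) hxb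
    rw [hgp, hgq, ← toVec_xor] at hsum
    have hlt' : p ^^^ q < 512 := by
      have h1 := ptsN_lt a p hp; have h2 := ptsN_lt b q hq
      have : (512 : ℕ) = 2 ^ 9 := rfl
      rw [this] at h1 h2 ⊢
      apply Nat.lt_pow_two_of_testBit
      intro j hj
      rw [Nat.testBit_xor,
        Nat.testBit_lt_two_pow (lt_of_lt_of_le h1 (Nat.pow_le_pow_right (by norm_num) hj)),
        Nat.testBit_lt_two_pow (lt_of_lt_of_le h2 (Nat.pow_le_pow_right (by norm_num) hj))]
      rfl
    exact good2 a b hab p hp q hq (toVec_eq_zero hlt' hsum)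
  · -- card 3
    obtain ⟨a, b, c, hab, hac, hbc, habc⟩ := Finset.card_eq_three.mp h
    have hsum3 : g a (x a) + g b (x b) + g c (x c) = 0 := by
      rw [habc] at hsum
      rw [show ({a, b, c} : Finset (Fin 22)) = insert a (insert b {c}) from rfl] at hsum
      rw [Finset.sum_insert (by simp [hab, hac]),
          Finset.sum_insert (by simp [hbc]), Finset.sum_singleton] at hsum
      rw [← add_assoc] at hsum
      exact hsum
    have hxa := hmemS a (by simp [habc])
    have hxb := hmemS b (by simp [habc])
    have hxc := hmemS c (by simp [habc])
    obtain ⟨p, hp, hgp⟩ := g_mem a (x a) hxa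
    obtain ⟨q, hq, hgq⟩ := g_mem b (x b) hxb
    obtain ⟨r, hr, hgr⟩ := g_mem c (x c) hxc
    rw [hgp, hgq, hgr, ← toVec_xor, ← toVec_xor] at hsum3
    have hlt' : (p ^^^ q) ^^^ r < 512 := by
      have h1 := ptsN_lt a p hp; have h2 := ptsN_lt b q hq; have h3 := ptsN_lt c r hr
      have : (512 : ℕ) = 2 ^ 9 := rfl
      rw [this] at h1 h2 h3 ⊢
      apply Nat.lt_pow_two_of_testBit
      intro j hj
      rw [Nat.testBit_xor, Nat.testBit_xor,
        Nat.testBit_lt_two_pow (lt_of_lt_of_le h1 (Nat.pow_le_pow_right (by norm_num) hj)),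
        Nat.testBit_lt_two_pow (lt_of_lt_of_le h2 (Nat.pow_le_pow_right (by norm_num) hj)),
        Nat.testBit_lt_two_pow (lt_of_lt_of_le h3 (Nat.pow_le_pow_right (by norm_num) hj))]
      rfl
    exact good3 a b c hab hac hbc p hp q hq r hr (toVec_eq_zero hlt' hsum3)

def eVec (r : Fin 9) : Fin 9 → ZMod 2 := fun j => if r = j then 1 else 0

lemma range_top : LinearMap.range L = ⊤ := by
  have mem1 : ∀ (i : Fin 22) (a : ZMod 2 × ZMod 2), g i a ∈ LinearMap.range L := by
    intro i a; exact ⟨Pi.single i a, L_single i a⟩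
  have mem2 : ∀ (i j : Fin 22) (a b : ZMod 2 × ZMod 2),
      g i a + g j b ∈ LinearMap.range L := by
    intro i j a b; exact Submodule.add_mem _ (mem1 i a) (mem1 j b)
  have hsingle : ∀ r : Fin 9, eVec r ∈ LinearMap.range L := by
    intro r
    fin_cases r
    · convert mem1 9 ((0,1) : ZMod 2 × ZMod 2) using 1
      rw [g_apply]; simp only [zero_smul, one_smul, zero_add]; decide
    · convert mem2 5 15 ((1,1) : ZMod 2 × ZMod 2) ((1,1) : ZMod 2 × ZMod 2) using 1
      rw [g_apply, g_apply]; simp only [one_smul]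
      rw [← toVec_xor, ← toVec_xor, ← toVec_xor]; decide
    · convert mem1 19 ((1,0) : ZMod 2 × ZMod 2) using 1
      rw [g_apply]; simp only [zero_smul, one_smul, add_zero]; decide
    · convert mem2 21 8 ((1,1) : ZMod 2 × ZMod 2) ((0,1) : ZMod 2 × ZMod 2) using 1
      rw [g_apply, g_apply]; simp only [zero_smul, one_smul, zero_add]
      rw [← toVec_xor, ← toVec_xor]; decide
    · convert mem2 19 20 ((1,0) : ZMod 2 × ZMod 2) ((1,1) : ZMod 2 × ZMod 2) using 1
      rw [g_apply, g_apply]; simp only [zero_smul, one_smul, add_zero]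
      rw [← toVec_xor, ← toVec_xor]; decide
    · convert mem2 5 12 ((1,1) : ZMod 2 × ZMod 2) ((0,1) : ZMod 2 × ZMod 2) using 1
      rw [g_apply, g_apply]; simp only [zero_smul, one_smul, zero_add]
      rw [← toVec_xor, ← toVec_xor]; decide
    · convert mem2 6 12 ((0,1) : ZMod 2 × ZMod 2) ((0,1) : ZMod 2 × ZMod 2) using 1
      rw [g_apply, g_apply]; simp only [zero_smul, one_smul, zero_add]
      rw [← toVec_xor]; decide
    · convert mem2 9 5 ((0,1) : ZMod 2 × ZMod 2) ((0,1) : ZMod 2 × ZMod 2) using 1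
      rw [g_apply, g_apply]; simp only [zero_smul, one_smul, zero_add]
      rw [← toVec_xor]; decide
    · convert mem2 20 10 ((1,1) : ZMod 2 × ZMod 2) ((1,0) : ZMod 2 × ZMod 2) using 1
      rw [g_apply, g_apply]; simp only [zero_smul, one_smul, add_zero]
      rw [← toVec_xor, ← toVec_xor]; decide
  rw [eq_top_iff]
  rintro y -
  rw [pi_eq_sum_univ y]
  exact Submodule.sum_mem _ (fun r _ => Submodule.smul_mem _ _ (hsingle r))

lemma finrank_ker : Module.finrank (ZMod 2) (LinearMap.ker L) = 35 := by
  have h := LinearMap.finrank_range_add_finrank_ker L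
  rw [range_top, finrank_top] at h
  have h9 : Module.finrank (ZMod 2) (Fin 9 → ZMod 2) = 9 := by
    simp [Module.finrank_pi]
  have h44 : Module.finrank (ZMod 2) (Fin 22 → ZMod 2 × ZMod 2) = 44 := by
    rw [Module.finrank_pi_fintype]
    simp [Module.finrank_prod]
  rw [h9, h44] at h
  omega

end Add22

/-- There exists an additive quaternary `[22,17.5,4]₄` code: a 35-dimensional
𝔽₂-subspace of `(𝔽₂²)²²` all of whose nonzero words have weight at least 4. -/
theorem exists_additive_22_17half_4 :
    ∃ C : Submodule (ZMod 2) (Fin 22 → ZMod 2 × ZMod 2),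
      Module.finrank (ZMod 2) C = 35 ∧ ∀ x ∈ C, x ≠ 0 → 4 ≤ qWt x := by
  refine ⟨LinearMap.ker Add22.L, Add22.finrank_ker, ?_⟩
  intro x hx hne
  exact Add22.ker_weight x (LinearMap.mem_ker.mp hx) hne
end
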